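/- arXiv:1907.12496 — 2 statements merged into one kernel-verified Lean document; each statement's English description precedes it below -/
import Mathlib

section
/- Let G be a profinite group, H an open normal subgroup of G, and H_0 > H_1 > H_2 > ⋯ a strictly decreasing sequence of open normal subgroups of G. Let L be the inverse limit of the group rings ℤ[G/(H ∩ H_i)] along the canonical surjections ℤ[G/(H ∩ H_{i+1})] → ℤ[G/(H ∩ H_i)], computed in ℤ[G]-modules; that is, L is the submodule of ∏_{i∈ℕ} ℤ[G/(H ∩ H_i)] consisting of compatible families. Then the largest discrete submodule of L is zero: if an element of L is fixed by every element of some open normal subgroup K of G, then it is zero. -/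
/-! For `j ≥ i`, the coefficient of `x i` at a coset `c` is the sum of the coefficients of `x j`
over the fibre of `G/(H ∩ H_j) → G/(H ∩ H_i)` above `c`. This fibre is stable under
`K ∩ H ∩ H_i`, whose orbits on `G/(H ∩ H_j)` all have `[K ∩ H ∩ H_i : K ∩ H ∩ H_j]` elements,
and `x j` is constant on them; so this index divides `x i c`. As the `H_j` strictly decrease,
the index is unbounded in `j`, which forces `x i c = 0`. -/

/-- The canonical map of coset spaces `G ⧸ S → G ⧸ T` induced by an inclusion `S ≤ T` of
subgroups, sending `gS` to `gT`. -/
def quotMap {G : Type} [Group G] {S T : Subgroup G} (h : S ≤ T) : G ⧸ S → G ⧸ T :=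
  Quotient.map' id fun _ _ hab =>
    QuotientGroup.leftRel_apply.mpr (h (QuotientGroup.leftRel_apply.mp hab))

lemma quotMap_comp {G : Type} [Group G] {S T U : Subgroup G} (hST : S ≤ T) (hTU : T ≤ U) :
    quotMap hTU ∘ quotMap hST = quotMap (hST.trans hTU) := by
  funext c
  induction c using QuotientGroup.induction_on
  rfl

lemma quotMap_refl {G : Type} [Group G] {S : Subgroup G} (h : S ≤ S) : quotMap h = id := by
  funext c
  induction c using QuotientGroup.induction_on
  rfl

lemma quotMap_smul {G : Type} [Group G] {S T : Subgroup G} (h : S ≤ T) (g : G) (c : G ⧸ S) :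
    quotMap h (g • c) = g • quotMap h c := by
  induction c using QuotientGroup.induction_on
  rfl

lemma QuotientGroup.smul_eq_self_of_mem {G : Type*} [Group G] {N : Subgroup G} [N.Normal]
    {g : G} (hg : g ∈ N) (c : G ⧸ N) : g • c = c := by
  induction c using QuotientGroup.induction_on with
  | H w =>
    change ((g * w : G) : G ⧸ N) = w
    rw [QuotientGroup.mk_mul, (QuotientGroup.eq_one_iff g).mpr hg, one_mul]

lemma MulAction.stabilizer_subgroup_quotient_normal {G : Type*} [Group G] (A N : Subgroup G)
    [N.Normal] (c : G ⧸ N) : MulAction.stabilizer A c = N.subgroupOf A := by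
  induction c using QuotientGroup.induction_on with
  | H w =>
    ext g
    rw [MulAction.mem_stabilizer_iff, Subgroup.mem_subgroupOf]
    change ((g * w : G) : G ⧸ N) = w ↔ _
    rw [QuotientGroup.mk_mul, mul_eq_right, QuotientGroup.eq_one_iff]

lemma MulAction.ncard_orbit_subgroup_quotient_normal {G : Type*} [Group G] (A N : Subgroup G)
    [N.Normal] (c : G ⧸ N) : (MulAction.orbit A c).ncard = N.relIndex A := by
  rw [← MulAction.index_stabilizer, MulAction.stabilizer_subgroup_quotient_normal]
  rfl

lemma MulAction.dvd_sum_of_ncard_orbit_eq {A α R : Type*} [Group A] [MulAction A α] [Fintype α]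
    [Semiring R] (f : α → R) (hf : ∀ (a : A) (y : α), f (a • y) = f y) (d : ℕ)
    (hd : ∀ y : α, (MulAction.orbit A y).ncard = d) :
    (d : R) ∣ ∑ y, f y := by
  classical
  let f' : MulAction.orbitRel.Quotient A α → R :=
    Quotient.lift f fun _ b ⟨a, ha⟩ => ha ▸ hf a b
  change (d : R) ∣ ∑ y, f' (Quotient.mk _ y)
  rw [Finset.sum_comp]
  refine Finset.dvd_sum fun ω hω => ?_
  obtain ⟨y, -, rfl⟩ := Finset.mem_image.mp hω
  have hfiber :
      (Finset.univ.filter fun z => Quotient.mk (MulAction.orbitRel A α) z = ⟦y⟧).card = d := by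
    rw [← hd y, ← Set.ncard_coe_finset]
    congr 1
    ext z
    simp [Quotient.eq, MulAction.orbitRel_apply]
  rw [hfiber, nsmul_eq_mul]
  exact dvd_mul_right _ _

lemma Subgroup.finiteIndex_of_isOpen {G : Type*} [Group G] [TopologicalSpace G]
    [SeparatelyContinuousMul G] [CompactSpace G] (U : Subgroup G) (hU : IsOpen (U : Set G)) :
    U.FiniteIndex :=
  haveI := U.quotient_finite_of_isOpen hU
  U.finiteIndex_of_finite_quotient

lemma Subgroup.lt_index_of_strictAnti {G : Type*} [Group G] {S : ℕ → Subgroup G}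
    (hS : StrictAnti S) [∀ n, (S n).FiniteIndex] (n : ℕ) : n < (S n).index := by
  induction n with
  | zero => exact Nat.pos_of_ne_zero Subgroup.FiniteIndex.index_ne_zero
  | succ n ih =>
    exact (Nat.succ_le_of_lt ih).trans_lt (Subgroup.index_strictAnti (hS n.lt_succ_self))

lemma Subgroup.index_le_relIndex_mul_index {G : Type*} [Group G] (B A : Subgroup G)
    [(B ⊓ A).FiniteIndex] : B.index ≤ B.relIndex A * A.index := by
  rw [← Subgroup.inf_relIndex_right, Subgroup.relIndex_mul_index inf_le_right]
  exact Subgroup.index_antitone inf_le_left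

lemma mapDomain_quotMap_of_le {G : Type} [Group G] {M : Type*} [AddCommMonoid M]
    {N : ℕ → Subgroup G} (hN : Antitone N) (x : ∀ i, G ⧸ N i →₀ M)
    (hx : ∀ i, Finsupp.mapDomain (quotMap (hN i.le_succ)) (x (i + 1)) = x i)
    {k l : ℕ} (hkl : k ≤ l) : Finsupp.mapDomain (quotMap (hN hkl)) (x l) = x k := by
  induction l, hkl using Nat.le_induction with
  | base => rw [quotMap_refl, Finsupp.mapDomain_id]
  | succ l hkl ih =>
    rw [← quotMap_comp (hN l.le_succ) (hN hkl), Finsupp.mapDomain_comp, hx, ih]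

lemma dvd_mapDomain_quotMap_apply {G : Type} [Group G] {R : Type*} [Semiring R]
    {N' N : Subgroup G} [N'.Normal] [N.Normal] [N'.FiniteIndex] (h : N' ≤ N)
    {A : Subgroup G} (hA : A ≤ N) (y : G ⧸ N' →₀ R) (hy : ∀ g ∈ A, ∀ c, y (g • c) = y c)
    (c : G ⧸ N) : (N'.relIndex A : R) ∣ Finsupp.mapDomain (quotMap h) y c := by
  classical
  have := Fintype.ofFinite (G ⧸ N')
  rw [Finsupp.mapDomain, Finsupp.sum_fintype _ _ fun _ => Finsupp.single_zero _,
    Finsupp.finsetSum_apply]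
  refine MulAction.dvd_sum_of_ncard_orbit_eq (A := A) _ (fun g c' => ?_) _
    (MulAction.ncard_orbit_subgroup_quotient_normal A N')
  change Finsupp.single (quotMap h ((g : G) • c')) (y ((g : G) • c')) c = _
  rw [quotMap_smul, QuotientGroup.smul_eq_self_of_mem (hA g.2), hy g g.2]

theorem stmt_11_general (G : Type) [Group G] [TopologicalSpace G] [IsTopologicalGroup G]
    [CompactSpace G]
    (H : Subgroup G) (hHn : H.Normal) (hHo : IsOpen (H : Set G))
    (Hseq : ℕ → Subgroup G) (hn : ∀ i, (Hseq i).Normal) (ho : ∀ i, IsOpen (Hseq i : Set G))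
    (hdec : ∀ i, Hseq (i + 1) < Hseq i)
    (x : ∀ i : ℕ, (G ⧸ (H ⊓ Hseq i)) →₀ ℤ)
    (hcompat : ∀ i : ℕ,
      Finsupp.mapDomain (quotMap (inf_le_inf_left H (hdec i).le)) (x (i + 1)) = x i)
    (hfix : ∃ K : Subgroup G, K.Normal ∧ IsOpen (K : Set G) ∧
      ∀ i : ℕ, ∀ g ∈ K, Finsupp.mapDomain (fun c : G ⧸ (H ⊓ Hseq i) => g • c) (x i) = x i) :
    ∀ i, x i = 0 := by
  obtain ⟨K, -, hKo, hK⟩ := hfix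
  have hanti : StrictAnti Hseq := strictAnti_nat_of_succ_lt hdec
  have hNanti : Antitone fun i => H ⊓ Hseq i := fun _ _ hkl =>
    inf_le_inf_left H (hanti.antitone hkl)
  have hHseqfin i := (Hseq i).finiteIndex_of_isOpen (ho i)
  have hNfin i := (H ⊓ Hseq i).finiteIndex_of_isOpen (hHo.inter (ho i))
  have hKNfin i := (K ⊓ (H ⊓ Hseq i)).finiteIndex_of_isOpen (hKo.inter (hHo.inter (ho i)))
  have hinv : ∀ j, ∀ g ∈ K, ∀ c, x j (g • c) = x j c := fun j g hg c => by
    rw [← Finsupp.mapDomain_apply (MulAction.injective g) (x j) c, hK j g hg]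
  intro i
  ext c
  have hdvd : ∀ j, i ≤ j → ((H ⊓ Hseq j).relIndex (K ⊓ (H ⊓ Hseq i)) : ℤ) ∣ x i c := by
    intro j hij
    rw [← mapDomain_quotMap_of_le hNanti x hcompat hij]
    exact dvd_mapDomain_quotMap_apply _ inf_le_right (x j) (fun g hg => hinv j g hg.1) c
  set C := (K ⊓ (H ⊓ Hseq i)).index
  set j := i + (x i c).natAbs * C
  have hgrowth : j < (H ⊓ Hseq j).relIndex (K ⊓ (H ⊓ Hseq i)) * C :=
    calc j < (Hseq j).index := Subgroup.lt_index_of_strictAnti hanti j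
      _ ≤ (H ⊓ Hseq j).index := Subgroup.index_antitone inf_le_right
      _ ≤ _ := Subgroup.index_le_relIndex_mul_index _ _
  refine Int.eq_zero_of_abs_lt_dvd (hdvd j (Nat.le_add_right _ _)) ?_
  rw [Int.abs_eq_natAbs, Nat.cast_lt]
  exact Nat.lt_of_mul_lt_mul_right ((Nat.le_add_left _ _).trans_lt hgrowth)

/-- **(Chirvasitu–Kanda, vanishing of the limit in Theorem 2.1.)** Let `G` be a profinite
group, `H` an open normal subgroup and `H_0 > H_1 > ⋯` a strictly decreasing sequence of
open normal subgroups of `G`. Consider the inverse limit of the `ℤ[G]`-modules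
`ℤ[G/(H ∩ H_i)]` along the canonical surjections, i.e. the compatible families in the
product. Its largest discrete submodule is zero: any compatible family fixed (componentwise)
by some open normal subgroup `K` of `G` vanishes. -/
theorem stmt_11 (G : Type) [Group G] [TopologicalSpace G] [IsTopologicalGroup G]
    [CompactSpace G] [T2Space G] [TotallyDisconnectedSpace G]
    (H : Subgroup G) (hHn : H.Normal) (hHo : IsOpen (H : Set G))
    (Hseq : ℕ → Subgroup G) (hn : ∀ i, (Hseq i).Normal) (ho : ∀ i, IsOpen (Hseq i : Set G))
    (hdec : ∀ i, Hseq (i + 1) < Hseq i)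
    (x : ∀ i : ℕ, (G ⧸ (H ⊓ Hseq i)) →₀ ℤ)
    (hcompat : ∀ i : ℕ,
      Finsupp.mapDomain (quotMap (inf_le_inf_left H (hdec i).le)) (x (i + 1)) = x i)
    (hfix : ∃ K : Subgroup G, K.Normal ∧ IsOpen (K : Set G) ∧
      ∀ i : ℕ, ∀ g ∈ K, Finsupp.mapDomain (fun c : G ⧸ (H ⊓ Hseq i) => g • c) (x i) = x i) :
    ∀ i, x i = 0 :=
  stmt_11_general G H hHn hHo Hseq hn ho hdec x hcompat hfix
end

section
/- Let G be a group, p a prime, k a field of characteristic p, and K ≤ H normal subgroups of G with [H : K] finite and p dividing [H : K]. If x ∈ k[G/K] is fixed by every element of H (for the action of G by left multiplication on cosets), then the image of x under the canonical map k[G/K] → k[G/H] is zero. -/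
/-!
An `H`-invariant `x` is constant on the `H`-orbits in `G/K`, and since `H` is normal these orbits
are exactly the fibres of `G/K → G/H`. Each fibre is in bijection with `H/K`, so the coefficient
of `gH` in the image of `x` is `[H : K] • x (gK)`, which vanishes in characteristic `p`.
-/

/-- An infinite fibre has `Nat.card = 0`; then `x` vanishes on it, being constant there and
finitely supported. -/
theorem Finsupp.mapDomain_apply_eq_card_smul {α β M : Type*} [AddCommMonoid M] {f : α → β}
    {x : α →₀ M} {a : α} (hx : ∀ b, f b = f a → x b = x a) :
    x.mapDomain f (f a) = Nat.card (f ⁻¹' {f a}) • x a := by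
  classical
  set s := {i ∈ x.support | f i = f a}
  calc x.mapDomain f (f a) = ∑ i ∈ s, x i := mapDomain_apply_eq_sum f x
    _ = s.card • x a := by
      rw [Finset.sum_congr rfl fun i hi => hx i (Finset.mem_filter.mp hi).2, Finset.sum_const]
    _ = Nat.card (f ⁻¹' {f a}) • x a := by
      by_cases ha : x a = 0
      · simp only [ha, smul_zero]
      · have hs : (s : Set α) = f ⁻¹' {f a} := by
          ext b
          simpa [s] using fun hb => hx b hb ▸ ha
        rw [← hs, Nat.card_coe_set_eq, Set.ncard_coe_finset]

theorem Finsupp.apply_smul_of_mapDomain_smul_eq {G α M : Type*} [Group G] [MulAction G α]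
    [AddCommMonoid M] {x : α →₀ M} {g : G} (hg : x.mapDomain (g • ·) = x) (a : α) :
    x (g • a) = x a :=
  calc x (g • a) = x.mapDomain (g • ·) (g • a) := by rw [hg]
    _ = x a := mapDomain_apply (MulAction.injective g) x a

section quotMap

variable {G : Type} [Group G] {S T : Subgroup G} (h : S ≤ T)

theorem quotMap_mk (g : G) : quotMap h (g : G ⧸ S) = g := rfl

theorem exists_smul_eq_of_quotMap_eq [T.Normal] {z z' : G ⧸ S}
    (hz : quotMap h z' = quotMap h z) : ∃ t ∈ T, t • z = z' := by
  obtain ⟨g, rfl⟩ := QuotientGroup.mk_surjective z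
  obtain ⟨g', rfl⟩ := QuotientGroup.mk_surjective z'
  refine ⟨g' / g, QuotientGroup.eq_iff_div_mem.mp hz, ?_⟩
  rw [MulAction.Quotient.smul_mk, smul_eq_mul, div_mul_cancel]

theorem card_preimage_quotMap (y : G ⧸ T) : Nat.card (quotMap h ⁻¹' {y}) = S.relIndex T := by
  let e := Subgroup.quotientEquivProdOfLE h
  have hfst : quotMap h ⁻¹' {y} = e ⁻¹' (Prod.fst ⁻¹' {y}) := rfl
  rw [hfst, Nat.card_preimage_of_injective e.injective (by simp),
    Set.preimage_fst_singleton_eq_range, Nat.card_range_of_injective (Prod.mk_right_injective y)]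
  rfl

end quotMap

theorem stmt_13_general (G : Type) [Group G] (p : ℕ) (k : Type) [Field k] [CharP k p]
    (K H : Subgroup G) [H.Normal] (hKH : K ≤ H)
    (hdvd : p ∣ K.relIndex H)
    (x : (G ⧸ K) →₀ k)
    (hx : ∀ h ∈ H, Finsupp.mapDomain (fun c : G ⧸ K => h • c) x = x) :
    Finsupp.mapDomain (quotMap hKH) x = 0 := by
  ext y
  obtain ⟨g, rfl⟩ := QuotientGroup.mk_surjective y
  have hconst : ∀ z, quotMap hKH z = quotMap hKH g → x z = x g := fun z hz => by
    obtain ⟨h, hh, rfl⟩ := exists_smul_eq_of_quotMap_eq hKH hz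
    exact Finsupp.apply_smul_of_mapDomain_smul_eq (hx h hh) g
  rw [← quotMap_mk hKH, Finsupp.mapDomain_apply_eq_card_smul hconst, card_preimage_quotMap,
    nsmul_eq_mul, (CharP.cast_eq_zero_iff k p _).mpr hdvd, zero_mul, Finsupp.zero_apply]

/-- **(Chirvasitu–Kanda, key step in Theorem 3.1, (a) ⇒ (c).)** Let `G` be a group, `p` a
prime, `k` a field of characteristic `p`, and `K ≤ H` normal subgroups of `G` with `[H : K]`
finite and divisible by `p`. If `x ∈ k[G/K]` (the `k`-vector space with basis `G/K`, with
`G` acting by left multiplication extended `k`-linearly) is fixed by every element of `H`,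
then the image of `x` under the canonical map `k[G/K] → k[G/H]` is zero. -/
theorem stmt_13 (G : Type) [Group G] (p : ℕ) (hp : p.Prime) (k : Type) [Field k] [CharP k p]
    (K H : Subgroup G) [K.Normal] [H.Normal] (hKH : K ≤ H)
    (hfin : K.relIndex H ≠ 0) (hdvd : p ∣ K.relIndex H)
    (x : (G ⧸ K) →₀ k)
    (hx : ∀ h ∈ H, Finsupp.mapDomain (fun c : G ⧸ K => h • c) x = x) :
    Finsupp.mapDomain (quotMap hKH) x = 0 :=
  stmt_13_general G p k K H hKH hdvd x hx
end
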